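/- arXiv:2603.06039 — 2 statements merged into one kernel-verified Lean document; each statement's English description precedes it below -/
import Mathlib

section
/- For any instance I all of whose packets have length 1 or 2, any zealous optimal schedule Opt of cost Opt(I), any tie-breaking rule for Greedy, and any router i ≥ 1: the maximum of Δ_j(t) over all times t ≥ 0 and all routers j ≤ i is at most (1 − 1/2^{i−1})·Opt(I). -/
/-!
# Packet forwarding on a line network

There are `k` active routers `1, …, k`; router `i` forwards packets to router `i+1`.
An instance is a finite collection of packets; packet `p` has a release time `rel p : ℕ`,
a start router `start p ∈ {1, …, k}` and a length `len p ≥ 1` with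
`start p + len p − 1 ≤ k`; `p` must be forwarded by routers
`start p, start p + 1, …, start p + len p − 1` in this order.
-/

/-- An instance of online packet forwarding on a line network with `k` active routers.
Packets are indexed by `Fin n`. -/
structure PInstance (k : ℕ) where
  n : ℕ
  rel : Fin n → ℕ
  start : Fin n → ℕ
  len : Fin n → ℕ

namespace PInstance

variable {k : ℕ}

/-- The instance is well-formed: start routers are at least `1`, lengths are at least `1`,
and every packet fits on the line: `start p + len p − 1 ≤ k`. -/
def Valid (I : PInstance k) : Prop :=
  ∀ p, 1 ≤ I.start p ∧ 1 ≤ I.len p ∧ I.start p + I.len p ≤ k + 1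

/-- All packets of the instance have length `1` or `2`. -/
def Short (I : PInstance k) : Prop :=
  ∀ p, I.len p = 1 ∨ I.len p = 2

/-- A schedule assigns to each packet `p` and each hop index `j < len p` (corresponding to
router `start p + j`) the time step at which that router forwards `p`.  Values at
hop indices `j ≥ len p` are irrelevant. -/
abbrev Sched (I : PInstance k) := Fin I.n → ℕ → ℕ

/-- `arr I S p j` is the time from which hop `j` of packet `p` is available:
packet `p` is available at its start router from time `rel p`, and a packet forwarded
at time `t` is available at the next router from time `t + 1`. -/
def arr (I : PInstance k) (S : Sched I) (p : Fin I.n) : ℕ → ℕ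
  | 0 => I.rel p
  | j + 1 => S p j + 1

/-- Feasibility of a schedule: every hop is forwarded no earlier than the time from which
it is available (this includes releases and the order of the hops), and each router
forwards at most one packet in each time step. -/
def Feasible (I : PInstance k) (S : Sched I) : Prop :=
  (∀ p j, j < I.len p → arr I S p j ≤ S p j) ∧
  (∀ p q jp jq, jp < I.len p → jq < I.len q →
    I.start p + jp = I.start q + jq → S p jp = S q jq → p = q)

/-- Completion time `C(p)`: one plus the time step in which the last router forwards `p`. -/
def comp (I : PInstance k) (S : Sched I) (p : Fin I.n) : ℕ :=
  S p (I.len p - 1) + 1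

/-- Flow time of packet `p`: `C(p) − r(p)`. -/
def flowTime (I : PInstance k) (S : Sched I) (p : Fin I.n) : ℕ :=
  comp I S p - I.rel p

/-- Cost of a schedule: the maximum flow time over all packets of the instance. -/
def cost (I : PInstance k) (S : Sched I) : ℕ :=
  Finset.univ.sup (flowTime I S)

/-- `Opt(I)`: the minimum cost over all feasible schedules. -/
noncomputable def opt (I : PInstance k) : ℕ :=
  sInf {c | ∃ S : Sched I, Feasible I S ∧ cost I S = c}

/-- Hop `j` of packet `p` is waiting (available but not yet forwarded) at time `t`. -/
def Waiting (I : PInstance k) (S : Sched I) (p : Fin I.n) (j t : ℕ) : Prop :=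
  j < I.len p ∧ arr I S p j ≤ t ∧ t ≤ S p j

/-- Remaining length `ℓ(p,t)`: the number of routers that still need to forward `p`
at time `t` (under schedule `S`). -/
noncomputable def remLen (I : PInstance k) (S : Sched I) (p : Fin I.n) (t : ℕ) : ℕ :=
  Set.ncard {j : ℕ | j < I.len p ∧ t ≤ S p j}

/-- Priority `π(p,t) = (t − r(p)) + ℓ(p,t)`. -/
noncomputable def prio (I : PInstance k) (S : Sched I) (p : Fin I.n) (t : ℕ) : ℕ :=
  (t - I.rel p) + remLen I S p t

/-- A schedule is zealous if, at every time step and every router at which some packet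
is available (waiting), it forwards a packet there. -/
def Zealous (I : PInstance k) (S : Sched I) : Prop :=
  ∀ t i, (∃ p j, Waiting I S p j t ∧ I.start p + j = i) →
    ∃ q jq, Waiting I S q jq t ∧ I.start q + jq = i ∧ S q jq = t

/-- `S` is a schedule that Greedy (with some tie-breaking rule) produces: it is feasible,
and in every time step, every router at which at least one packet is waiting forwards a
waiting packet of maximum priority among the packets waiting there. -/
def IsGreedy (I : PInstance k) (S : Sched I) : Prop :=
  Feasible I S ∧
  ∀ t i, (∃ p j, Waiting I S p j t ∧ I.start p + j = i) →
    ∃ q jq, Waiting I S q jq t ∧ I.start q + jq = i ∧ S q jq = t ∧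
      ∀ p j, Waiting I S p j t → I.start p + j = i → prio I S p t ≤ prio I S q t

/-- The number of packets released by time `t` that still need to be forwarded by
router `i` at time `t` under schedule `S`. -/
noncomputable def needs (I : PInstance k) (S : Sched I) (i t : ℕ) : ℕ :=
  Set.ncard {p : Fin I.n | I.rel p ≤ t ∧ ∃ j, j < I.len p ∧ I.start p + j = i ∧ t ≤ S p j}

end PInstance

/-- `Δ_i(t) = g_i(t) − a_i(t)`, where `g_i(t)` counts the packets (released by time `t`)
that Greedy's schedule `Sg` still needs to forward on router `i` at time `t`, and
`a_i(t)` is the analogous quantity for the schedule `So` of `Opt`. -/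
noncomputable def delta {k : ℕ} (I : PInstance k) (Sg So : PInstance.Sched I)
    (i t : ℕ) : ℤ :=
  (I.needs Sg i t : ℤ) - (I.needs So i t : ℤ)

/-!
Write `F` for the cost of `Opt` and `n_i(t)` for the number of packets a schedule has forwarded
on router `i` before time `t`, so that `Δ_i(t)` is Opt's count minus Greedy's. On router `1`
Greedy is never behind. On router `i + 1`, a positive `Δ_{i+1}(t)` is at most `Δ_{i+1}(s + 1)`
for the last step `s < t` at which Greedy idles there, hence at most the number `m` of packets
that Opt but not Greedy has forwarded there before `s + 1`. Each of these is a two-hop packet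
that Greedy still holds at router `i` at time `s`. If `r` is the earliest release among them, the
priority rule makes Greedy forward on router `i` during `[r, s]` only packets released by `r`,
which Opt forwards there before `r + F`. Comparing the two counts on router `i` at
`τ = max s (r + F)`, with `m ≤ s - r`, gives `2m ≤ sup Δ_i + F`; iterating this halving gives
`Δ_i ≤ (1 - 2^{1-i}) F`.
-/

namespace PInstance

variable {k : ℕ} {I : PInstance k} {S Sg So : Sched I} {p q : Fin I.n} {i j s t τ : ℕ}

def Forwards (I : PInstance k) (S : Sched I) (i t : ℕ) : Prop :=
  ∃ p j, j < I.len p ∧ I.start p + j = i ∧ S p j = t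

def forwarded (I : PInstance k) (S : Sched I) (i t : ℕ) : Set (Fin I.n) :=
  {p | ∃ j, j < I.len p ∧ I.start p + j = i ∧ S p j < t}

def ahead (I : PInstance k) (S T : Sched I) (i t : ℕ) : Set (Fin I.n) :=
  I.forwarded S i t \ I.forwarded T i t

noncomputable def numForwarded (I : PInstance k) (S : Sched I) (i t : ℕ) : ℕ :=
  (I.forwarded S i t).ncard

def released (I : PInstance k) (i t : ℕ) : Set (Fin I.n) :=
  {p | I.rel p ≤ t ∧ ∃ j, j < I.len p ∧ I.start p + j = i}

theorem Feasible.rel_add_le (hf : I.Feasible S) : ∀ {j}, j < I.len p → I.rel p + j ≤ S p j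
  | 0, h => by simpa [arr] using hf.1 p 0 h
  | j + 1, h => by
    have hprev := hf.rel_add_le (j := j) (by omega)
    have hhop := hf.1 p (j + 1) h
    simp only [arr] at hhop
    omega

theorem Feasible.rel_le (hf : I.Feasible S) (h : j < I.len p) : I.rel p ≤ S p j :=
  le_trans (Nat.le_add_right _ _) (hf.rel_add_le h)

theorem Feasible.add_le_sched (hf : I.Feasible S) :
    ∀ {d}, j + d < I.len p → S p j + d ≤ S p (j + d)
  | 0, _ => le_rfl
  | d + 1, h => by
    have hprev := hf.add_le_sched (d := d) (by omega)
    have hhop := hf.1 p (j + d + 1) h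
    simp only [arr] at hhop
    show S p j + (d + 1) ≤ S p (j + d + 1)
    omega

theorem Feasible.sched_add_len_sub_le (hf : I.Feasible S) (h : j < I.len p) :
    S p j + (I.len p - j) ≤ I.rel p + I.cost S := by
  have hlast := hf.add_le_sched (p := p) (j := j) (d := I.len p - 1 - j) (by omega)
  rw [show j + (I.len p - 1 - j) = I.len p - 1 by omega] at hlast
  have hflow : I.flowTime S p ≤ I.cost S := Finset.le_sup (Finset.mem_univ p)
  unfold flowTime comp at hflow
  omega

theorem Feasible.mem_forwarded_of_rel_add_cost_le (hf : I.Feasible S) (hj : j < I.len p)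
    (hi : I.start p + j = i) (hτ : I.rel p + I.cost S ≤ τ) : p ∈ I.forwarded S i τ :=
  ⟨j, hj, hi, by have := hf.sched_add_len_sub_le hj; omega⟩

theorem remLen_le_len (S : Sched I) (p : Fin I.n) (t : ℕ) : I.remLen S p t ≤ I.len p :=
  calc I.remLen S p t ≤ (Set.Iio (I.len p)).ncard :=
        Set.ncard_le_ncard (fun _ hj => hj.1) (Set.finite_Iio _)
    _ = I.len p := Set.ncard_Iio_nat _

theorem Feasible.remLen_eq_len (hf : I.Feasible S) (ht : t ≤ S p 0) :
    I.remLen S p t = I.len p := by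
  have hall : {j | j < I.len p ∧ t ≤ S p j} = Set.Iio (I.len p) := by
    ext j
    refine ⟨fun hj => hj.1, fun hj => ⟨hj, ?_⟩⟩
    have := hf.add_le_sched (p := p) (j := 0) (d := j) (by simpa using hj)
    simp only [Nat.zero_add] at this
    omega
  rw [remLen, hall, Set.ncard_Iio_nat]

theorem Feasible.needs_add_numForwarded (hf : I.Feasible S) (i t : ℕ) :
    I.needs S i t + I.numForwarded S i t = (I.released i t).ncard := by
  set P : Set (Fin I.n) := {p | I.rel p ≤ t ∧ ∃ j, j < I.len p ∧ I.start p + j = i ∧ t ≤ S p j}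
  have hunion : P ∪ I.forwarded S i t = I.released i t := by
    ext p
    constructor
    · rintro (⟨hr, j, hj, hi, -⟩ | ⟨j, hj, hi, hlt⟩)
      · exact ⟨hr, j, hj, hi⟩
      · exact ⟨(hf.rel_le hj).trans hlt.le, j, hj, hi⟩
    · rintro ⟨hr, j, hj, hi⟩
      rcases le_or_gt t (S p j) with hle | hlt
      · exact Or.inl ⟨hr, j, hj, hi, hle⟩
      · exact Or.inr ⟨j, hj, hi, hlt⟩
  have hdisj : Disjoint P (I.forwarded S i t) := by
    refine Set.disjoint_left.2 ?_
    rintro p ⟨-, j, -, hi, hle⟩ ⟨j', -, hi', hlt⟩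
    obtain rfl : j = j' := by omega
    omega
  rw [needs, numForwarded, ← Set.ncard_union_eq hdisj, hunion]

theorem delta_eq_numForwarded_sub (hg : I.Feasible Sg) (ho : I.Feasible So) (i t : ℕ) :
    delta I Sg So i t = (I.numForwarded So i t : ℤ) - I.numForwarded Sg i t := by
  have hG := hg.needs_add_numForwarded i t
  have hO := ho.needs_add_numForwarded i t
  unfold delta
  omega

theorem numForwarded_zero (S : Sched I) (i : ℕ) : I.numForwarded S i 0 = 0 := by
  simp [numForwarded, forwarded]

theorem numForwarded_succ_of_not_forwards (h : ¬ I.Forwards S i t) :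
    I.numForwarded S i (t + 1) = I.numForwarded S i t := by
  refine congrArg Set.ncard (Set.ext fun p => ⟨?_, ?_⟩)
  · rintro ⟨j, hj, hi, hlt⟩
    refine ⟨j, hj, hi, lt_of_le_of_ne (Nat.lt_succ_iff.1 hlt) ?_⟩
    exact fun heq => h ⟨p, j, hj, hi, heq⟩
  · rintro ⟨j, hj, hi, hlt⟩
    exact ⟨j, hj, hi, by omega⟩

theorem Feasible.numForwarded_succ_of_forwards (hf : I.Feasible S) (h : I.Forwards S i t) :
    I.numForwarded S i (t + 1) = I.numForwarded S i t + 1 := by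
  obtain ⟨p, j, hj, hi, hpt⟩ := h
  have hinsert : I.forwarded S i (t + 1) = insert p (I.forwarded S i t) := by
    ext q
    simp only [Set.mem_insert_iff]
    constructor
    · rintro ⟨jq, hjq, hqi, hlt⟩
      rcases Nat.lt_or_ge (S q jq) t with h | h
      · exact Or.inr ⟨jq, hjq, hqi, h⟩
      · exact Or.inl (hf.2 q p jq j hjq hj (by omega) (by omega))
    · rintro (rfl | ⟨jq, hjq, hqi, hlt⟩)
      · exact ⟨j, hj, hi, by omega⟩
      · exact ⟨jq, hjq, hqi, by omega⟩
  have hnew : p ∉ I.forwarded S i t := by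
    rintro ⟨j', -, hi', hlt⟩
    obtain rfl : j' = j := by omega
    omega
  rw [numForwarded, numForwarded, hinsert, Set.ncard_insert_of_notMem hnew]

theorem Feasible.numForwarded_succ_le (hf : I.Feasible S) (i t : ℕ) :
    I.numForwarded S i (t + 1) ≤ I.numForwarded S i t + 1 := by
  by_cases h : I.Forwards S i t
  · exact (hf.numForwarded_succ_of_forwards h).le
  · exact (numForwarded_succ_of_not_forwards h).le.trans (Nat.le_succ _)

theorem Feasible.numForwarded_add_le (hf : I.Feasible S) (i t : ℕ) :
    ∀ m, I.numForwarded S i (t + m) ≤ I.numForwarded S i t + m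
  | 0 => le_rfl
  | m + 1 => by
    have := hf.numForwarded_succ_le i (t + m)
    have := hf.numForwarded_add_le i t m
    rw [← Nat.add_assoc]
    omega

theorem delta_zero (hg : I.Feasible Sg) (ho : I.Feasible So) (i : ℕ) : delta I Sg So i 0 = 0 := by
  simp [delta_eq_numForwarded_sub hg ho, numForwarded_zero]

theorem delta_succ_le_of_forwards (hg : I.Feasible Sg) (ho : I.Feasible So)
    (h : I.Forwards Sg i t) : delta I Sg So i (t + 1) ≤ delta I Sg So i t := by
  have hG := hg.numForwarded_succ_of_forwards h
  have hO := ho.numForwarded_succ_le i t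
  rw [delta_eq_numForwarded_sub hg ho, delta_eq_numForwarded_sub hg ho]
  omega

theorem delta_le_ncard_ahead (hg : I.Feasible Sg) (ho : I.Feasible So) (i t : ℕ) :
    delta I Sg So i t ≤ (I.ahead So Sg i t).ncard := by
  have := Set.le_ncard_sdiff (I.forwarded Sg i t) (I.forwarded So i t)
  rw [delta_eq_numForwarded_sub hg ho, numForwarded, numForwarded, ahead]
  omega

theorem IsGreedy.forwards_of_waiting (hG : I.IsGreedy Sg) (hw : I.Waiting Sg p j t)
    (hi : I.start p + j = i) : I.Forwards Sg i t := by
  obtain ⟨q, jq, hwq, hqi, hqt, -⟩ := hG.2 t i ⟨p, j, hw, hi⟩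
  exact ⟨q, jq, hwq.1, hqi, hqt⟩

theorem IsGreedy.prio_le_of_forwards (hG : I.IsGreedy Sg) (hw : I.Waiting Sg p j t)
    (hi : I.start p + j = i) {jq : ℕ} (hjq : jq < I.len q) (hqi : I.start q + jq = i)
    (hqt : Sg q jq = t) : I.prio Sg p t ≤ I.prio Sg q t := by
  obtain ⟨q', jq', hwq', hq'i, hq't, hmax⟩ := hG.2 t i ⟨p, j, hw, hi⟩
  obtain rfl : q' = q := hG.1.2 q' q jq' jq hwq'.1 hjq (by omega) (by omega)
  exact hmax p j hw hi

/-- A packet waiting at its first router has priority `(t - rel p) + len p`, so anything Greedy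
forwards there instead, being no longer, was released no later. -/
theorem IsGreedy.rel_le_of_forwards_of_waiting_first (hG : I.IsGreedy Sg)
    (hlen : I.len q ≤ I.len p) (hrel : I.rel p ≤ t) (ht : t ≤ Sg p 0) {jq : ℕ}
    (hjq : jq < I.len q) (hqi : I.start q + jq = I.start p) (hqt : Sg q jq = t) :
    I.rel q ≤ I.rel p := by
  have hw : I.Waiting Sg p 0 t := ⟨by omega, by simpa [arr] using hrel, ht⟩
  have hprio := hG.prio_le_of_forwards hw (Nat.add_zero _) hjq hqi hqt
  have hrelq : I.rel q ≤ t := hqt ▸ hG.1.rel_le hjq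
  rw [prio, prio, hG.1.remLen_eq_len ht] at hprio
  have := remLen_le_len Sg q t
  omega

theorem IsGreedy.rel_le_of_mem_forwarded (hG : I.IsGreedy Sg) {e : Fin I.n}
    (hlen : ∀ q, I.len q ≤ I.len e) (hs : s ≤ Sg e 0)
    (hp : p ∈ I.forwarded Sg (I.start e) (s + 1)) : I.rel p ≤ I.rel e := by
  obtain ⟨j, hj, hi, hlt⟩ := hp
  rcases Nat.lt_or_ge (Sg p j) (I.rel e) with hbefore | hafter
  · exact (hG.1.rel_le hj).trans hbefore.le
  · exact hG.rel_le_of_forwards_of_waiting_first (hlen p) hafter (by omega) hj hi rfl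

theorem IsGreedy.numForwarded_one_le (hV : I.Valid) (hOf : I.Feasible So) (hG : I.IsGreedy Sg) :
    ∀ t, I.numForwarded So 1 t ≤ I.numForwarded Sg 1 t
  | 0 => by simp [numForwarded_zero]
  | t + 1 => by
    by_cases hbusy : I.Forwards Sg 1 t
    · have := hOf.numForwarded_succ_le 1 t
      have := hG.numForwarded_one_le hV hOf t
      rw [hG.1.numForwarded_succ_of_forwards hbusy]
      omega
    · rw [numForwarded_succ_of_not_forwards hbusy]
      refine Set.ncard_le_ncard ?_ (Set.toFinite _)
      rintro p ⟨j, hj, hi, hlt⟩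
      obtain rfl : j = 0 := by have := (hV p).1; omega
      refine ⟨0, hj, hi, lt_of_not_ge fun hle => hbusy ?_⟩
      refine hG.forwards_of_waiting ⟨hj, ?_, hle⟩ hi
      simpa [arr] using (hOf.rel_le hj).trans (Nat.lt_succ_iff.1 hlt)

theorem IsGreedy.delta_one_nonpos (hV : I.Valid) (hOf : I.Feasible So) (hG : I.IsGreedy Sg)
    (t : ℕ) : delta I Sg So 1 t ≤ 0 := by
  have := hG.numForwarded_one_le hV hOf t
  rw [delta_eq_numForwarded_sub hG.1 hOf]
  omega

theorem IsGreedy.exists_idle_delta_le (hOf : I.Feasible So) (hG : I.IsGreedy Sg) :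
    ∀ {t}, 0 < delta I Sg So i t →
      ∃ s, ¬ I.Forwards Sg i s ∧ delta I Sg So i t ≤ delta I Sg So i (s + 1)
  | 0, hpos => by simp [delta_zero hG.1 hOf] at hpos
  | t + 1, hpos => by
    by_cases hbusy : I.Forwards Sg i t
    · have hle := delta_succ_le_of_forwards hG.1 hOf hbusy
      obtain ⟨s, hidle, hs⟩ := hG.exists_idle_delta_le hOf (hpos.trans_le hle)
      exact ⟨s, hidle, hle.trans hs⟩
    · exact ⟨t, hbusy, le_rfl⟩

/-- Greedy idles at `s` only if the hop was not yet available there, so it is the second hop of a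
packet that Greedy had not yet forwarded from router `i` before time `s`. -/
theorem IsGreedy.upstream_of_mem_ahead (hS : I.Short) (hOf : I.Feasible So)
    (hG : I.IsGreedy Sg) (hidle : ¬ I.Forwards Sg (i + 1) s) {e : Fin I.n}
    (he : e ∈ I.ahead So Sg (i + 1) (s + 1)) :
    I.start e = i ∧ I.len e = 2 ∧ s ≤ Sg e 0 ∧ So e 0 < s := by
  obtain ⟨⟨j, hj, hi, hSo⟩, hSg⟩ := he
  have hSgj : s + 1 ≤ Sg e j := not_lt.1 fun hlt => hSg ⟨j, hj, hi, hlt⟩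
  have hunavail : s < arr I Sg e j := lt_of_not_ge fun hav =>
    hidle (hG.forwards_of_waiting ⟨hj, hav, by omega⟩ hi)
  have hrel := hOf.rel_le hj
  obtain rfl | rfl : j = 0 ∨ j = 1 := by rcases hS e with h | h <;> omega
  · simp only [arr] at hunavail
    omega
  · have hhop := hOf.1 e 1 hj
    simp only [arr] at hunavail hhop
    have hlen : I.len e = 2 := by rcases hS e with h | h <;> omega
    exact ⟨by omega, hlen, by omega, by omega⟩

theorem IsGreedy.ncard_ahead_add_le_delta (hS : I.Short) (hOf : I.Feasible So)
    (hG : I.IsGreedy Sg) (hidle : ¬ I.Forwards Sg (i + 1) s) {e₀ : Fin I.n}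
    (he₀ : e₀ ∈ I.ahead So Sg (i + 1) (s + 1)) (hsτ : s ≤ τ)
    (hτ : I.rel e₀ + I.cost So ≤ τ) :
    ((I.ahead So Sg (i + 1) (s + 1)).ncard : ℤ) + s ≤ delta I Sg So i τ + τ := by
  set E := I.ahead So Sg (i + 1) (s + 1)
  set A := I.forwarded Sg i (s + 1)
  have hup := fun {e} (he : e ∈ E) => hG.upstream_of_mem_ahead hS hOf hidle he
  obtain ⟨hstart₀, hlen₀, hSg₀, hSo₀⟩ := hup he₀
  have hA : A ⊆ I.forwarded So i τ := by
    intro p hp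
    have hlen : ∀ q, I.len q ≤ I.len e₀ := fun q => by rcases hS q with h | h <;> omega
    have hrel := hG.rel_le_of_mem_forwarded hlen hSg₀ (by rw [hstart₀]; exact hp)
    obtain ⟨j, hj, hi, -⟩ := hp
    exact hOf.mem_forwarded_of_rel_add_cost_le hj hi (by omega)
  have hE : E ⊆ I.forwarded So i τ := fun e he => by
    obtain ⟨hstart, hlen, -, hSo⟩ := hup he
    exact ⟨0, by omega, by omega, by omega⟩
  -- a packet of `E` forwarded by Greedy on router `i` before `s + 1` is forwarded exactly at `s`
  have hAE : (A ∩ E).ncard ≤ 1 := by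
    refine (Set.ncard_le_one (Set.toFinite _)).2 ?_
    rintro a ⟨⟨ja, hja, hai, hat⟩, haE⟩ b ⟨⟨jb, hjb, hbi, hbt⟩, hbE⟩
    obtain ⟨ha, -, haSg, -⟩ := hup haE
    obtain ⟨hb, -, hbSg, -⟩ := hup hbE
    obtain rfl : ja = 0 := by omega
    obtain rfl : jb = 0 := by omega
    exact hG.1.2 a b 0 0 hja hjb (by omega) (by omega)
  have hAE_card := Set.ncard_union_add_ncard_inter A E
  have hunion := Set.ncard_le_ncard (Set.union_subset hA hE) (Set.toFinite _)
  have hbusy : I.Forwards Sg i s := by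
    refine hG.forwards_of_waiting ⟨by omega, ?_, hSg₀⟩ hstart₀
    simpa [arr] using (hOf.rel_le (by omega)).trans hSo₀.le
  have hstep := hG.1.numForwarded_succ_of_forwards hbusy
  have hgrowth := hG.1.numForwarded_add_le i s (τ - s)
  rw [show s + (τ - s) = τ by omega] at hgrowth
  have hAcard : A.ncard = I.numForwarded Sg i (s + 1) := rfl
  rw [delta_eq_numForwarded_sub hG.1 hOf]
  unfold numForwarded at hstep hgrowth hunion hAcard ⊢
  omega

theorem IsGreedy.ncard_ahead_add_rel_le (hS : I.Short) (hOf : I.Feasible So)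
    (hG : I.IsGreedy Sg) (hidle : ¬ I.Forwards Sg (i + 1) s) {e₀ : Fin I.n}
    (he₀ : e₀ ∈ I.ahead So Sg (i + 1) (s + 1))
    (hmin : ∀ e ∈ I.ahead So Sg (i + 1) (s + 1), I.rel e₀ ≤ I.rel e) :
    (I.ahead So Sg (i + 1) (s + 1)).ncard + I.rel e₀ ≤ s := by
  have hup := fun {e} (he : e ∈ I.ahead So Sg (i + 1) (s + 1)) =>
    hG.upstream_of_mem_ahead hS hOf hidle he
  have hfirst : ∀ e ∈ I.ahead So Sg (i + 1) (s + 1), I.rel e ≤ So e 0 ∧ So e 0 < s :=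
    fun e he => ⟨hOf.rel_le (by rw [(hup he).2.1]; omega), (hup he).2.2.2⟩
  have hcard := Set.ncard_le_ncard_of_injOn (fun e => So e 0) (t := Set.Ico (I.rel e₀) s)
    (fun e he => ⟨(hmin e he).trans (hfirst e he).1, (hfirst e he).2⟩)
    (fun a ha b hb hab => by
      obtain ⟨hsa, hla, -⟩ := hup ha
      obtain ⟨hsb, hlb, -⟩ := hup hb
      exact hOf.2 a b 0 0 (by omega) (by omega) (by omega) hab)
  have h₀ := hfirst e₀ he₀
  rw [Set.ncard_Ico_nat] at hcard
  omega

theorem IsGreedy.ncard_ahead_le (hS : I.Short) (hOf : I.Feasible So)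
    (hG : I.IsGreedy Sg) (hidle : ¬ I.Forwards Sg (i + 1) s)
    (hne : (I.ahead So Sg (i + 1) (s + 1)).Nonempty)
    (B : ℝ) (hB : B ≤ I.cost So) (hprev : ∀ τ, (delta I Sg So i τ : ℝ) ≤ B) :
    ((I.ahead So Sg (i + 1) (s + 1)).ncard : ℝ) ≤ (B + I.cost So) / 2 := by
  obtain ⟨e₀, he₀, hmin⟩ := Set.exists_min_image _ I.rel (Set.toFinite _) hne
  set E := I.ahead So Sg (i + 1) (s + 1)
  set τ := max s (I.rel e₀ + I.cost So)
  have hcount : (E.ncard : ℝ) + s ≤ delta I Sg So i τ + τ := by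
    exact_mod_cast
      hG.ncard_ahead_add_le_delta hS hOf hidle he₀ (le_max_left _ _) (le_max_right _ _)
  have hwindow : (E.ncard : ℝ) + I.rel e₀ ≤ s := by
    exact_mod_cast hG.ncard_ahead_add_rel_le hS hOf hidle he₀ hmin
  have hD := hprev τ
  rcases max_choice s (I.rel e₀ + I.cost So) with hτ | hτ <;>
    rw [show τ = _ from hτ] at hcount hD
  · linarith
  · push_cast at hcount
    linarith

theorem IsGreedy.delta_succ_le (hS : I.Short) (hOf : I.Feasible So) (hG : I.IsGreedy Sg)
    (B : ℝ) (hB : B ≤ I.cost So) (hprev : ∀ τ, (delta I Sg So i τ : ℝ) ≤ B) (t : ℕ) :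
    (delta I Sg So (i + 1) t : ℝ) ≤ (B + I.cost So) / 2 := by
  rcases le_or_gt (delta I Sg So (i + 1) t) 0 with hnonpos | hpos
  · have hB0 := hprev 0
    rw [delta_zero hG.1 hOf, Int.cast_zero] at hB0
    have : (delta I Sg So (i + 1) t : ℝ) ≤ 0 := by exact_mod_cast hnonpos
    have : (0 : ℝ) ≤ I.cost So := Nat.cast_nonneg _
    linarith
  obtain ⟨s, hidle, hle⟩ := hG.exists_idle_delta_le hOf hpos
  have hahead := (hle.trans (delta_le_ncard_ahead hG.1 hOf (i + 1) (s + 1)))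
  have hne : (I.ahead So Sg (i + 1) (s + 1)).Nonempty :=
    Set.nonempty_of_ncard_ne_zero (by omega)
  calc (delta I Sg So (i + 1) t : ℝ) ≤ (I.ahead So Sg (i + 1) (s + 1)).ncard := by
        exact_mod_cast hahead
    _ ≤ (B + I.cost So) / 2 := hG.ncard_ahead_le hS hOf hidle hne B hB hprev

theorem IsGreedy.delta_succ_le_one_sub_half_pow (hV : I.Valid) (hS : I.Short)
    (hOf : I.Feasible So) (hG : I.IsGreedy Sg) :
    ∀ m t, (delta I Sg So (m + 1) t : ℝ) ≤ (1 - (1 / 2) ^ m) * I.cost So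
  | 0, t => by simpa using hG.delta_one_nonpos hV hOf t
  | m + 1, t => by
    have hstep := hG.delta_succ_le hS hOf ((1 - (1 / 2) ^ m) * I.cost So)
      (mul_le_of_le_one_left (Nat.cast_nonneg _) (sub_le_self _ (by positivity)))
      (hG.delta_succ_le_one_sub_half_pow hV hS hOf m) t
    convert hstep using 1
    ring

end PInstance

theorem delta_upper_bound_general {k : ℕ} (I : PInstance k) (hV : I.Valid) (hS : I.Short)
    (So : PInstance.Sched I) (hOf : I.Feasible So)
    (hOopt : I.cost So = I.opt)
    (Sg : PInstance.Sched I) (hG : I.IsGreedy Sg) (i : ℕ) :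
    ∀ (t j : ℕ), 1 ≤ j → j ≤ i →
      ((delta I Sg So j t : ℤ) : ℝ) ≤ (1 - 1 / 2 ^ (i - 1)) * (I.opt : ℝ) := by
  intro t j hj hji
  obtain ⟨m, rfl⟩ : ∃ m, j = m + 1 := ⟨j - 1, by omega⟩
  have hpow : ((1 : ℝ) / 2) ^ (i - 1) ≤ (1 / 2) ^ m :=
    pow_le_pow_of_le_one (by norm_num) (by norm_num) (by omega)
  calc ((delta I Sg So (m + 1) t : ℤ) : ℝ) ≤ (1 - (1 / 2) ^ m) * I.cost So :=
        hG.delta_succ_le_one_sub_half_pow hV hS hOf m t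
    _ ≤ (1 - (1 / 2) ^ (i - 1)) * I.cost So := by gcongr
    _ = (1 - 1 / 2 ^ (i - 1)) * I.opt := by rw [hOopt, one_div_pow]

/-- For any instance all of whose packets have length `1` or `2`, any
zealous optimal schedule `So`, any tie-breaking rule for Greedy (schedule `Sg`), and any
router `i ≥ 1`: the maximum of `Δ_j(t)` over all times `t ≥ 0` and all routers `j ≤ i` is
at most `(1 − 1/2^{i−1})·Opt(I)`. -/
theorem delta_upper_bound {k : ℕ} (I : PInstance k) (hV : I.Valid) (hS : I.Short)
    (So : PInstance.Sched I) (hOf : I.Feasible So) (hOz : I.Zealous So)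
    (hOopt : I.cost So = I.opt)
    (Sg : PInstance.Sched I) (hG : I.IsGreedy Sg) (i : ℕ) (hi : 1 ≤ i) :
    ∀ (t j : ℕ), 1 ≤ j → j ≤ i →
      ((delta I Sg So j t : ℤ) : ℝ) ≤ (1 - 1 / 2 ^ (i - 1)) * (I.opt : ℝ) :=
  delta_upper_bound_general I hV hS So hOf hOopt Sg hG i
end

section
/- Let h ≥ 1 and let the instance on k = 2 routers consist of 2h packets of length 1 released at time 0 at router 1 and h packets of length 2 released at time h at router 1. Then there exists a feasible schedule for this instance whose maximum flow time is at most 2h + 1; consequently, its optimal cost is at most 2h + 1. -/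
/-- Build an instance from a list of packets, each given as a triple
(release time, start router, length). -/
def ofTriples (k : ℕ) (L : List (ℕ × ℕ × ℕ)) : PInstance k where
  n := L.length
  rel p := (L.get p).1
  start p := (L.get p).2.1
  len p := (L.get p).2.2

/-- The instance on `k = 2` routers consisting of `2h` packets of length `1` released at
time `0` at router `1` and `h` packets of length `2` released at time `h` at router `1`. -/
def shortLong (h : ℕ) : PInstance 2 :=
  ofTriples 2 (List.replicate (2 * h) (0, 1, 1) ++ List.replicate h (h, 1, 2))

/-!
Forward the packets through router 1 one per time step in index order, each long packet
moving on to router 2 in the next step: short packet `p < 2h` finishes at `p + 1 ≤ 2h`, and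
long packet `p < 3h`, released at `h`, finishes at `p + 2 ≤ 3h + 1`.
-/

namespace PInstance

variable {k : ℕ} {I : PInstance k}

def pipelined (I : PInstance k) (σ : Fin I.n → ℕ) : Sched I :=
  fun p j => σ p + j

theorem feasible_pipelined {σ : Fin I.n → ℕ} (hσ : Function.Injective σ)
    (hstart : ∀ p q, I.start p = I.start q) (hrel : ∀ p, I.rel p ≤ σ p) :
    I.Feasible (I.pipelined σ) := by
  refine ⟨fun p j _ => ?_, fun p q jp jq _ _ hrouter htime => hσ ?_⟩
  · cases j with
    | zero => exact hrel p
    | succ j => exact (Nat.add_assoc _ _ _).le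
  · have : jp = jq := by rw [hstart p q] at hrouter; omega
    subst this
    exact Nat.add_right_cancel htime

theorem flowTime_pipelined (σ : Fin I.n → ℕ) {p : Fin I.n} (hp : 1 ≤ I.len p) :
    I.flowTime (I.pipelined σ) p = σ p + I.len p - I.rel p := by
  simp only [flowTime, comp, pipelined]
  omega

theorem opt_le_cost {S : Sched I} (hS : I.Feasible S) : I.opt ≤ I.cost S :=
  Nat.sInf_le ⟨S, hS, rfl⟩

end PInstance

theorem ofTriples_packet {k : ℕ} (L : List (ℕ × ℕ × ℕ)) (i : ℕ) (hi : i < L.length) :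
    ((ofTriples k L).rel ⟨i, hi⟩, (ofTriples k L).start ⟨i, hi⟩, (ofTriples k L).len ⟨i, hi⟩) =
      L[i] :=
  rfl

theorem shortLong_packet (h : ℕ) (p : Fin (shortLong h).n) :
    (shortLong h).start p = 1 ∧
      ((p : ℕ) < 2 * h ∧ (shortLong h).rel p = 0 ∧ (shortLong h).len p = 1 ∨
        2 * h ≤ p ∧ p < 3 * h ∧ (shortLong h).rel p = h ∧ (shortLong h).len p = 2) := by
  obtain ⟨i, hi⟩ := p
  show _ ∧ (i < 2 * h ∧ _ ∨ 2 * h ≤ i ∧ i < 3 * h ∧ _)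
  have hlt : i < 2 * h + h := by simpa [shortLong, ofTriples] using hi
  have packet := ofTriples_packet (k := 2)
    (List.replicate (2 * h) (0, 1, 1) ++ List.replicate h (h, 1, 2)) i (by simpa using hlt)
  simp only [List.getElem_append, List.length_replicate, List.getElem_replicate] at packet
  split_ifs at packet with hshort <;> simp only [Prod.mk.injEq] at packet <;>
    obtain ⟨hrel, hstart, hlen⟩ := packet
  · exact ⟨hstart, .inl ⟨hshort, hrel, hlen⟩⟩
  · exact ⟨hstart, .inr ⟨by omega, by omega, hrel, hlen⟩⟩

theorem opt_shortLong_upper_general (h : ℕ) :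
    (∃ S : PInstance.Sched (shortLong h), (shortLong h).Feasible S ∧
      (shortLong h).cost S ≤ 2 * h + 1) ∧
    (shortLong h).opt ≤ 2 * h + 1 := by
  have hfeas : (shortLong h).Feasible ((shortLong h).pipelined Fin.val) := by
    refine PInstance.feasible_pipelined Fin.val_injective
      (fun p q => by rw [(shortLong_packet h p).1, (shortLong_packet h q).1]) (fun p => ?_)
    rcases (shortLong_packet h p).2 with ⟨_, hrel, _⟩ | ⟨_, _, hrel, _⟩ <;> omega
  have hcost : (shortLong h).cost ((shortLong h).pipelined Fin.val) ≤ 2 * h + 1 := by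
    refine Finset.sup_le fun p _ => ?_
    rcases (shortLong_packet h p).2 with ⟨_, hrel, hlen⟩ | ⟨_, _, hrel, hlen⟩ <;>
      rw [PInstance.flowTime_pipelined _ (by omega)] <;> omega
  exact ⟨⟨_, hfeas, hcost⟩, (PInstance.opt_le_cost hfeas).trans hcost⟩

/-- Let `h ≥ 1`.  Then there exists a feasible schedule for the above
instance whose maximum flow time is at most `2h + 1`; consequently, its optimal cost is at
most `2h + 1`. -/
theorem opt_shortLong_upper (h : ℕ) (hh : 1 ≤ h) :
    (∃ S : PInstance.Sched (shortLong h), (shortLong h).Feasible S ∧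
      (shortLong h).cost S ≤ 2 * h + 1) ∧
    (shortLong h).opt ≤ 2 * h + 1 :=
  opt_shortLong_upper_general h
end
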